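/- arXiv:2403.03443 — 4 statements merged into one kernel-verified Lean document; each statement's English description precedes it below -/
import Mathlib

section
/- The generating function identity Σ_{m≥0} (Σ_{α ⊢ m, β component-wise ≤ α} ((-1)^{l(α)}/z_α) · ∏_i C(a_i, b_i)) w^m · w^{|β|} = (1-w) · ((-1)^{l(β)}/z_β) · w^{|β|} holds for every partition β = 1^{b_1} 2^{b_2}⋯; equivalently, Σ_{α ⊢ m} ((-1)^{l(α)}/z_α) ∏_i C(a_i, b_i) equals the coefficient of w^{m - |β|} in ((-1)^{l(β)}/z_β)(1-w). -/
/-!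
Write `S n = ∑_{γ ⊢ n} (-1)^{l(γ)} / z_γ`. If `α = β ∪ γ` then `∏_i C(a_i, b_i) / z_α = 1 / (z_β z_γ)`,
and the product vanishes unless `β ⊆ α`; hence the sum over `α ⊢ m` is `(-1)^{l(β)} / z_β · S (m - |β|)`.
Taking `β = (j)` gives `∑_{α ⊢ n} (-1)^{l(α)} a_j / z_α = -S (n - j) / j`, and since `∑_j j a_j = n`
this yields the recursion `n S n = -∑_{i < n} S i`. So `S` is `1, -1, 0, 0, …`,
the coefficient sequence of `exp (-∑ wⁱ / i) = 1 - w`.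
-/

open Finset

/-- `z_α = ∏_i i^{a_i} a_i!` for a partition `α` of `n`, as a rational. -/
noncomputable def zPart {n : ℕ} (α : n.Partition) : ℚ :=
  ∏ i ∈ Finset.range (n + 1),
    (i : ℚ) ^ (Multiset.count i α.parts) * ((Multiset.count i α.parts).factorial : ℚ)

namespace Nat.Partition

variable {k d n : ℕ}

def add (β : k.Partition) (γ : d.Partition) : (k + d).Partition where
  parts := β.parts + γ.parts
  parts_pos hi := (Multiset.mem_add.1 hi).elim (fun h ↦ β.parts_pos h) (fun h ↦ γ.parts_pos h)
  parts_sum := by rw [Multiset.sum_add, β.parts_sum, γ.parts_sum]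

@[simp]
lemma add_parts (β : k.Partition) (γ : d.Partition) : (β.add γ).parts = β.parts + γ.parts := rfl

lemma add_injective (β : k.Partition) : Function.Injective (β.add : d.Partition → _) :=
  fun _ _ h ↦ Nat.Partition.ext (add_left_cancel (congrArg parts h))

lemma le_of_parts_le {β : k.Partition} {α : n.Partition} (h : β.parts ≤ α.parts) : k ≤ n := by
  obtain ⟨u, hu⟩ := Multiset.le_iff_exists_add.1 h
  have hsum := congrArg Multiset.sum hu
  rw [Multiset.sum_add, α.parts_sum, β.parts_sum] at hsum
  omega

lemma exists_add_eq_of_parts_le {β : k.Partition} {α : (k + d).Partition}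
    (h : β.parts ≤ α.parts) : ∃ γ : d.Partition, β.add γ = α := by
  obtain ⟨u, hu⟩ := Multiset.le_iff_exists_add.1 h
  have hsum : u.sum = d := by
    have := congrArg Multiset.sum hu
    rw [Multiset.sum_add, α.parts_sum, β.parts_sum] at this
    omega
  exact ⟨⟨u, fun hi ↦ α.parts_pos (hu ▸ Multiset.mem_add.2 (Or.inr hi)), hsum⟩,
    Nat.Partition.ext hu.symm⟩

lemma toFinset_parts_subset_range (α : n.Partition) {N : ℕ} (h : n ≤ N) :
    α.parts.toFinset ⊆ range (N + 1) := fun _ hi ↦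
  mem_range_succ_iff.2 ((le_of_mem_parts (Multiset.mem_toFinset.1 hi)).trans h)

lemma sum_mul_count_parts (α : n.Partition) :
    ∑ j ∈ range (n + 1), j * α.parts.count j = n := by
  conv_rhs => rw [← α.parts_sum,
    sum_multiset_count_of_subset _ _ (α.toFinset_parts_subset_range le_rfl)]
  simp only [smul_eq_mul, mul_comm]

end Nat.Partition

lemma choose_div_pow_mul_factorial {K : Type*} [Field K] [CharZero K] (x : K) (b c : ℕ) :
    ((b + c).choose b : K) / (x ^ (b + c) * (b + c).factorial) =
      (x ^ b * b.factorial)⁻¹ * (x ^ c * c.factorial)⁻¹ := by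
  have hfac : ((b + c).factorial : K) = (b + c).choose b * b.factorial * c.factorial := by
    rw [Nat.choose_symm_add]
    exact_mod_cast (Nat.add_choose_mul_factorial_mul_factorial b c).symm
  have hchoose : ((b + c).choose b : K) ≠ 0 :=
    Nat.cast_ne_zero.2 (Nat.choose_pos (Nat.le_add_right b c)).ne'
  rw [hfac, pow_add, div_eq_mul_inv]
  simp only [mul_inv]
  field_simp

lemma prod_choose_count_eq_zero {ι : Type*} [DecidableEq ι] {A B : Multiset ι} {s : Finset ι}
    (hs : B.toFinset ⊆ s) (h : ¬ B ≤ A) : ∏ i ∈ s, (A.count i).choose (B.count i) = 0 := by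
  obtain ⟨i, hi⟩ := not_forall.1 (mt Multiset.le_iff_count.2 h)
  have hiB : i ∈ B.toFinset := Multiset.mem_toFinset.2 (Multiset.count_pos.1 (by omega))
  exact prod_eq_zero (hs hiB) (Nat.choose_eq_zero_of_lt (by omega))

lemma zPart_eq_prod_of_subset {n : ℕ} (α : n.Partition) {s : Finset ℕ}
    (hs : α.parts.toFinset ⊆ s) :
    zPart α = ∏ i ∈ s, (i : ℚ) ^ α.parts.count i * ((α.parts.count i).factorial : ℚ) := by
  have hone : ∀ t : Finset ℕ, ∀ i ∈ t, i ∉ α.parts.toFinset →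
      (i : ℚ) ^ α.parts.count i * ((α.parts.count i).factorial : ℚ) = 1 := by
    intro t i _ hi
    simp [Multiset.count_eq_zero.2 (by simpa using hi)]
  rw [zPart, ← prod_subset (α.toFinset_parts_subset_range le_rfl) (hone _),
    ← prod_subset hs (hone _)]

noncomputable def altWeight {n : ℕ} (α : n.Partition) : ℚ :=
  (-1) ^ Multiset.card α.parts / zPart α

noncomputable def altWeightSum (n : ℕ) : ℚ :=
  ∑ γ : n.Partition, altWeight γ

lemma altWeight_add_mul_prod_choose {k d : ℕ} (β : k.Partition) (γ : d.Partition)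
    {s : Finset ℕ} (hs : (β.add γ).parts.toFinset ⊆ s) :
    altWeight (β.add γ) * ∏ i ∈ s, (((β.add γ).parts.count i).choose (β.parts.count i) : ℚ) =
      altWeight β * altWeight γ := by
  have hβ : β.parts.toFinset ⊆ s := fun i hi ↦ hs (by simp_all)
  have hγ : γ.parts.toFinset ⊆ s := fun i hi ↦ hs (by simp_all)
  simp only [altWeight, zPart_eq_prod_of_subset _ hs, zPart_eq_prod_of_subset _ hβ,
    zPart_eq_prod_of_subset _ hγ, Nat.Partition.add_parts, Multiset.card_add, Multiset.count_add,
    pow_add (-1 : ℚ), div_eq_mul_inv, ← prod_inv_distrib]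
  rw [mul_assoc, ← prod_mul_distrib, mul_mul_mul_comm, ← prod_mul_distrib]
  congr 1
  refine prod_congr rfl fun i _ ↦ ?_
  rw [mul_comm, ← div_eq_mul_inv, choose_div_pow_mul_factorial]

lemma sum_altWeight_mul_prod_choose {k d : ℕ} (β : k.Partition) {s : Finset ℕ}
    (hs : range (k + d + 1) ⊆ s) :
    ∑ α : (k + d).Partition,
        altWeight α * ∏ i ∈ s, ((α.parts.count i).choose (β.parts.count i) : ℚ) =
      altWeight β * altWeightSum d := by
  rw [altWeightSum, mul_sum]
  refine (Fintype.sum_of_injective _ β.add_injective (fun γ ↦ altWeight β * altWeight γ)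
    (fun α ↦ altWeight α * ∏ i ∈ s, ((α.parts.count i).choose (β.parts.count i) : ℚ))
    ?_ fun γ ↦ ?_).symm
  · intro α hα
    have hβα : ¬ β.parts ≤ α.parts := fun h ↦
      hα ((Nat.Partition.exists_add_eq_of_parts_le h).imp fun _ ↦ id)
    have hβ : β.parts.toFinset ⊆ s :=
      (β.toFinset_parts_subset_range (Nat.le_add_right k d)).trans hs
    rw [← Nat.cast_prod, prod_choose_count_eq_zero hβ hβα, Nat.cast_zero, mul_zero]
  · exact (altWeight_add_mul_prod_choose β γ
      (((β.add γ).toFinset_parts_subset_range le_rfl).trans hs)).symm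

lemma altWeight_indiscrete {j : ℕ} (hj : j ≠ 0) :
    altWeight (Nat.Partition.indiscrete j) = -(j : ℚ)⁻¹ := by
  have hsub : (Nat.Partition.indiscrete j).parts.toFinset ⊆ {j} := by simp [hj]
  simp [altWeight, zPart_eq_prod_of_subset _ hsub, hj, div_eq_mul_inv]

lemma sum_altWeight_mul_count {n j : ℕ} (hj : j ≠ 0) (hjn : j ≤ n) :
    ∑ α : n.Partition, altWeight α * α.parts.count j = -altWeightSum (n - j) / j := by
  obtain ⟨d, rfl⟩ := Nat.exists_eq_add_of_le hjn
  have hcount : ∀ α : (j + d).Partition, ∏ i ∈ range (j + d + 1),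
      ((α.parts.count i).choose ((Nat.Partition.indiscrete j).parts.count i) : ℚ) =
        α.parts.count j := by
    intro α
    rw [prod_eq_single j (fun i _ hij ↦ by simp [hj, hij]) (fun h ↦ by simp_all)]
    simp [hj]
  simp_rw [← hcount, sum_altWeight_mul_prod_choose _ subset_rfl, altWeight_indiscrete hj,
    Nat.add_sub_cancel_left]
  ring

lemma mul_altWeightSum (n : ℕ) :
    n * altWeightSum n = -∑ i ∈ range n, altWeightSum i := by
  calc (n : ℚ) * altWeightSum n
      = ∑ j ∈ range (n + 1), j * ∑ α : n.Partition, altWeight α * α.parts.count j := by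
        simp_rw [mul_sum]
        rw [altWeightSum, mul_sum, sum_comm]
        refine sum_congr rfl fun α _ ↦ ?_
        have hn : (n : ℚ) = ∑ j ∈ range (n + 1), (j : ℚ) * α.parts.count j := by
          exact_mod_cast α.sum_mul_count_parts.symm
        rw [hn, sum_mul]
        exact sum_congr rfl fun j _ ↦ by ring
    _ = ∑ j ∈ range n, -altWeightSum (n - (j + 1)) := by
        rw [sum_range_succ']
        simp only [Nat.cast_zero, zero_mul, add_zero]
        refine sum_congr rfl fun j hj ↦ ?_
        rw [sum_altWeight_mul_count j.succ_ne_zero (mem_range.1 hj)]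
        field_simp
    _ = -∑ i ∈ range n, altWeightSum i := by
        rw [sum_neg_distrib, ← sum_range_reflect]
        exact congrArg _ (sum_congr rfl fun i hi ↦ by rw [mem_range] at hi; congr 1; omega)

lemma altWeightSum_zero : altWeightSum 0 = 1 := by
  simp [altWeightSum, altWeight, zPart]

lemma altWeightSum_one : altWeightSum 1 = -1 := by
  simpa [altWeightSum_zero] using mul_altWeightSum 1

lemma altWeightSum_eq_zero_of_sum_range {n : ℕ} (hn : n ≠ 0)
    (h : ∑ i ∈ range n, altWeightSum i = 0) : altWeightSum n = 0 := by
  have hmul := mul_altWeightSum n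
  rw [h, neg_zero, mul_eq_zero] at hmul
  exact hmul.resolve_left (Nat.cast_ne_zero.2 hn)

lemma sum_range_altWeightSum_eq_zero (n : ℕ) : ∑ i ∈ range (n + 2), altWeightSum i = 0 := by
  induction n with
  | zero => simp [sum_range_succ, altWeightSum_zero, altWeightSum_one]
  | succ n ih =>
    rw [sum_range_succ, ih, altWeightSum_eq_zero_of_sum_range (by omega) ih, add_zero]

/-- For a fixed partition `β = 1^{b_1}2^{b_2}⋯` (of `k`) and every `m`,
`Σ_{α ⊢ m} ((-1)^{l(α)}/z_α) ∏_i C(a_i, b_i)` equals the coefficient of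
`w^{m - |β|}` in `((-1)^{l(β)}/z_β)(1 - w)`, i.e. it is `(-1)^{l(β)}/z_β` if
`m = |β|`, `-(-1)^{l(β)}/z_β` if `m = |β| + 1`, and `0` otherwise. -/
theorem alternating_partition_sum (k m : ℕ) (β : k.Partition) :
    (∑ α : m.Partition,
        ((-1 : ℚ) ^ (Multiset.card α.parts) / zPart α) *
          ∏ i ∈ Finset.range (m + k + 1),
            ((Multiset.count i α.parts).choose (Multiset.count i β.parts) : ℚ)) =
      if m = k then (-1 : ℚ) ^ (Multiset.card β.parts) / zPart β
      else if m = k + 1 then -((-1 : ℚ) ^ (Multiset.card β.parts) / zPart β)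
      else 0 := by
  by_cases hkm : k ≤ m
  · obtain ⟨d, rfl⟩ := Nat.exists_eq_add_of_le hkm
    refine (sum_altWeight_mul_prod_choose β (range_subset_range.2 (by omega))).trans ?_
    rcases d with _ | _ | d
    · simp [altWeightSum_zero, altWeight]
    · simp [altWeightSum_one, altWeight]
    · rw [altWeightSum_eq_zero_of_sum_range (by omega) (sum_range_altWeightSum_eq_zero d),
        mul_zero, if_neg (by omega), if_neg (by omega)]
  · rw [if_neg (by omega), if_neg (by omega)]
    refine sum_eq_zero fun α _ ↦ ?_
    have hβ := β.toFinset_parts_subset_range (Nat.le_add_left k m)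
    rw [← Nat.cast_prod, prod_choose_count_eq_zero hβ (mt Nat.Partition.le_of_parts_le hkm),
      Nat.cast_zero, mul_zero]
end

section
/- For any partition μ = (μ_1, μ_2) with two parts and μ_1 ≥ 2, and any nonnegative integers b, a: |Ξ((μ_1,μ_2), b, a)| - |Ξ((μ_2-1, μ_1+1), b, a)| = |ST(μ^t, b, a)|, where Ξ(α, b, a) is the set of fillings of the Young diagram of the composition α by letters of the alphabet A = {red 0 < blue 0 < red 1 < blue 1 < …} that are weakly increasing in each row with each red value used at most once per row, with exactly b blue entries and total numerical value a, and ST(λ, b, a) is the set of such fillings of the Young diagram of λ that are row-standard in blue entries (weakly increasing rows, each blue value at most once per row) and column-standard in red entries (weakly increasing columns, each red value at most once per column), with b blue entries and total numerical value a. -/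
/-- A letter of the alphabet `A = {red 0, blue 0, red 1, blue 1, …}`:
the pair `(i, false)` is red `i` and `(i, true)` is blue `i`; the numerical value is `i`. -/
abbrev Letter := ℕ × Bool

/-- Rank realizing the total order `red 0 < blue 0 < red 1 < blue 1 < ⋯`. -/
def rank (x : Letter) : ℕ := 2 * x.1 + (if x.2 then 1 else 0)

/-- A filling of the Young diagram of a composition `α` (row `i` has `α i` boxes). -/
def Filling {k : ℕ} (α : Fin k → ℕ) : Type := (i : Fin k) → Fin (α i) → Letter

/-- Rows weakly increasing, with each red value occurring at most once per row. -/
def RowStandardRed {k : ℕ} {α : Fin k → ℕ} (T : Filling α) : Prop :=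
  ∀ (i : Fin k) (j j' : Fin (α i)), j < j' →
    rank (T i j) ≤ rank (T i j') ∧ (T i j = T i j' → (T i j).2 = true)

/-- Rows weakly increasing, with each blue value occurring at most once per row. -/
def RowStandardBlue {k : ℕ} {α : Fin k → ℕ} (T : Filling α) : Prop :=
  ∀ (i : Fin k) (j j' : Fin (α i)), j < j' →
    rank (T i j) ≤ rank (T i j') ∧ (T i j = T i j' → (T i j).2 = false)

/-- Columns weakly increasing, with each red value occurring at most once per column. -/
def ColStandardRed {k : ℕ} {α : Fin k → ℕ} (T : Filling α) : Prop :=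
  ∀ (i i' : Fin k), i < i' → ∀ (j : ℕ) (h : j < α i) (h' : j < α i'),
    rank (T i ⟨j, h⟩) ≤ rank (T i' ⟨j, h'⟩) ∧
      (T i ⟨j, h⟩ = T i' ⟨j, h'⟩ → (T i ⟨j, h⟩).2 = true)

/-- Number of blue entries. -/
def blCount {k : ℕ} {α : Fin k → ℕ} (T : Filling α) : ℕ :=
  ∑ i, ∑ j, (if (T i j).2 then 1 else 0)

/-- Total numerical value of the entries. -/
def wtCount {k : ℕ} {α : Fin k → ℕ} (T : Filling α) : ℕ :=
  ∑ i, ∑ j, (T i j).1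

/-- `Ξ(α, b, a)`: fillings of `α` that are row-standard in the red entries, with `b`
blue entries and total numerical value `a`. -/
def Xi {k : ℕ} (α : Fin k → ℕ) (b a : ℕ) : Set (Filling α) :=
  {T | RowStandardRed T ∧ blCount T = b ∧ wtCount T = a}

/-- `SuperT(λ, b, a)`: supertableaux of shape `λ` (row-standard in blue, column-standard
in red) with `b` blue entries and total numerical value `a`. -/
def SuperT {k : ℕ} (lam : Fin k → ℕ) (b a : ℕ) : Set (Filling lam) :=
  {T | RowStandardBlue T ∧ ColStandardRed T ∧ blCount T = b ∧ wtCount T = a}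

/-!
An element of `Ξ((n, m))` is a pair of rows `(u, v)`, each a chain for `RedLE`; a supertableau
of shape `(μ₁, μ₂)ᵗ` is read through its two columns as such a pair of lengths `(μ₁, μ₂)` which,
in addition, satisfies `BlueLE u[i] v[i]` in every column. If a pair of lengths `(μ₁, μ₂)` fails
this, let `j` be the first failing column and exchange the tails,
`(u, v) ↦ (u₀ ⋯ u_{j-1} v_{j+1} ⋯, v₀ ⋯ v_j u_j ⋯)`. In the new pair the first failing column is
again `j` (now because `RedLE v_j v_{j+1}`), or `j` is the end of the shorter row, so the same
rule undoes it. This matches the failing pairs of lengths `(μ₁, μ₂)` with all pairs of lengths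
`(μ₂ - 1, μ₁ + 1)`, preserving the multiset of letters.
-/

/-- `x ≤ y`, strictly unless `x` is blue. Rows of `Ξ` and columns of supertableaux are chains for
`RedLE`, rows of supertableaux for `BlueLE`. -/
def RedLE (x y : Letter) : Prop := rank x ≤ rank y ∧ (x = y → x.2 = true)

def BlueLE (x y : Letter) : Prop := rank x ≤ rank y ∧ (x = y → x.2 = false)

lemma not_redLE_iff {x y : Letter} : ¬ RedLE y x ↔ BlueLE x y := by
  obtain ⟨x, _ | _⟩ := x <;> obtain ⟨y, _ | _⟩ := y <;>
    simp [RedLE, BlueLE, rank] <;> omega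

lemma RedLE.trans {x y z : Letter} (hxy : RedLE x y) (hyz : RedLE y z) : RedLE x z := by
  obtain ⟨x, _ | _⟩ := x <;> obtain ⟨y, _ | _⟩ := y <;> obtain ⟨z, _ | _⟩ := z <;>
    simp_all [RedLE, rank] <;> omega

lemma BlueLE.trans_redLE {x y z : Letter} (hxy : BlueLE x y) (hyz : RedLE y z) : RedLE x z := by
  obtain ⟨x, _ | _⟩ := x <;> obtain ⟨y, _ | _⟩ := y <;> obtain ⟨z, _ | _⟩ := z <;>
    simp_all [RedLE, BlueLE, rank] <;> omega

instance : DecidableRel RedLE := fun _ _ => inferInstanceAs (Decidable (_ ∧ _))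

instance : IsTrans Letter RedLE := ⟨fun _ _ _ => RedLE.trans⟩

namespace List.Pairwise

variable {α : Type*} {R : α → α → Prop} [IsTrans α R] {l : List α} {i k : ℕ}

lemma rel_getElem_of_le_of_rel (hl : l.Pairwise R) (hik : i ≤ k) (hk : k < l.length) {x : α}
    (h : R l[k] x) : R l[i] x := by
  rcases hik.lt_or_eq with hik | rfl
  · exact _root_.trans (List.pairwise_iff_getElem.mp hl i k _ hk hik) h
  · exact h

lemma rel_getElem_of_rel_of_le (hl : l.Pairwise R) (hik : i ≤ k) (hk : k < l.length) {x : α}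
    (h : R x l[i]) : R x l[k] := by
  rcases hik.lt_or_eq with hik | rfl
  · exact _root_.trans h (List.pairwise_iff_getElem.mp hl i k _ hk hik)
  · exact h

end List.Pairwise

abbrev TwoRows := List Letter × List Letter

namespace TwoRows

variable (p : TwoRows) {i j : ℕ}

/-- Column `i` of the rows `p.1` (top) and `p.2` (bottom) breaks the supertableau condition
`BlueLE p.1[i] p.2[i]` (see `not_violation_iff`). -/
def Violation (i : ℕ) : Prop :=
  ∃ (h₁ : i < p.1.length) (h₂ : i < p.2.length), RedLE p.2[i] p.1[i]

instance : DecidablePred p.Violation := fun _ => inferInstanceAs (Decidable (∃ _ : _, _))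

/-- The first violating column, and `min p.1.length p.2.length` when there is none. -/
def firstViolation : ℕ :=
  Nat.find (⟨_, Or.inr rfl⟩ : ∃ j, p.Violation j ∨ j = min p.1.length p.2.length)

variable {p}

lemma Violation.lt_min (h : p.Violation i) : i < min p.1.length p.2.length :=
  let ⟨h₁, h₂, _⟩ := h; _root_.lt_min h₁ h₂

lemma not_violation_iff :
    ¬ p.Violation i ↔ ∀ (h₁ : i < p.1.length) (h₂ : i < p.2.length), BlueLE p.1[i] p.2[i] := by
  simp only [Violation, not_exists, not_redLE_iff]

lemma firstViolation_le_min : p.firstViolation ≤ min p.1.length p.2.length :=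
  Nat.find_min' _ (Or.inr rfl)

lemma not_violation_of_lt_firstViolation (h : i < p.firstViolation) : ¬ p.Violation i :=
  fun hi => Nat.find_min _ h (Or.inl hi)

lemma violation_firstViolation (h : p.firstViolation < min p.1.length p.2.length) :
    p.Violation p.firstViolation :=
  (Nat.find_spec (⟨_, Or.inr rfl⟩ : ∃ j, p.Violation j ∨ j = _)).resolve_right h.ne

lemma firstViolation_eq (hj : j ≤ min p.1.length p.2.length)
    (hbefore : ∀ i < j, ¬ p.Violation i) (hat : j < min p.1.length p.2.length → p.Violation j) :
    p.firstViolation = j := by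
  refine (Nat.find_eq_iff _).mpr ⟨?_, fun i hi h => ?_⟩
  · exact (hj.lt_or_eq.imp_left hat)
  · exact h.elim (hbefore i hi) (by omega)

lemma firstViolation_lt_min_iff :
    p.firstViolation < min p.1.length p.2.length ↔ ∃ i, p.Violation i :=
  ⟨fun h => ⟨_, violation_firstViolation h⟩, fun ⟨_, hi⟩ =>
    lt_of_not_ge fun h => not_violation_of_lt_firstViolation (h.trans_lt' hi.lt_min) hi⟩

def swapAt (j : ℕ) (p : TwoRows) : TwoRows :=
  (p.1.take j ++ p.2.drop (j + 1), p.2.take (j + 1) ++ p.1.drop j)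

lemma length_swapAt_fst (h₁ : j ≤ p.1.length) (h₂ : j < p.2.length) :
    (swapAt j p).1.length = p.2.length - 1 := by
  simp only [swapAt, List.length_append, List.length_take, List.length_drop]
  omega

lemma length_swapAt_snd (h₁ : j ≤ p.1.length) (h₂ : j < p.2.length) :
    (swapAt j p).2.length = p.1.length + 1 := by
  simp only [swapAt, List.length_append, List.length_take, List.length_drop]
  omega

lemma swapAt_swapAt (h₁ : j ≤ p.1.length) (h₂ : j < p.2.length) : swapAt j (swapAt j p) = p := by
  have h₁' : min j p.1.length = j := min_eq_left h₁
  have h₂' : min (j + 1) p.2.length = j + 1 := min_eq_left h₂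
  simp [swapAt, h₁', h₂']

open List in
lemma perm_swapAt : ((swapAt j p).1 ++ (swapAt j p).2).Perm (p.1 ++ p.2) := by
  obtain ⟨u, v⟩ := p
  calc _ = u.take j ++ (v.drop (j + 1) ++ v.take (j + 1) ++ u.drop j) := by simp [swapAt]
    _ ~ u.take j ++ (u.drop j ++ (v.drop (j + 1) ++ v.take (j + 1))) :=
        perm_append_comm.append_left _
    _ = u ++ (v.drop (j + 1) ++ v.take (j + 1)) := by rw [← append_assoc, take_append_drop]
    _ ~ u ++ (v.take (j + 1) ++ v.drop (j + 1)) := perm_append_comm.append_left _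
    _ = u ++ v := by rw [take_append_drop]

lemma violation_swapAt_iff (hi : i < j) (h₁ : j ≤ p.1.length) (h₂ : j < p.2.length) :
    (swapAt j p).Violation i ↔ p.Violation i := by
  have hu : i < min j p.1.length := by omega
  have hv : i < min (j + 1) p.2.length := by omega
  have hu' : i < p.1.length := by omega
  have hv' : i < p.2.length := by omega
  simp [Violation, swapAt, hu, hv, hu', hv', Nat.lt_add_right]

lemma pairwise_swapAt (hu : p.1.Pairwise RedLE) (hv : p.2.Pairwise RedLE) (h₂ : j < p.2.length)
    (hbefore : ∀ i < j, ¬ p.Violation i) (hat : j < p.1.length → p.Violation j) :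
    (swapAt j p).1.Pairwise RedLE ∧ (swapAt j p).2.Pairwise RedLE := by
  refine ⟨List.pairwise_append.mpr ⟨hu.sublist (List.take_sublist _ _),
    hv.sublist (List.drop_sublist _ _), ?_⟩, List.pairwise_append.mpr
    ⟨hv.sublist (List.take_sublist _ _), hu.sublist (List.drop_sublist _ _), ?_⟩⟩
  · intro a ha b hb
    obtain ⟨k, hk, rfl⟩ := List.mem_take_iff_getElem.mp ha
    obtain ⟨l, hl, rfl⟩ := List.mem_drop_iff_getElem.mp hb
    have hkv : k < p.2.length := by omega
    have hblue : BlueLE p.1[k] p.2[k] := not_violation_iff.mp (hbefore k (by omega)) _ hkv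
    exact hblue.trans_redLE
      (List.pairwise_iff_getElem.mp hv k (j + 1 + l) hkv (by omega) (by omega))
  · intro a ha b hb
    obtain ⟨k, hk, rfl⟩ := List.mem_take_iff_getElem.mp ha
    obtain ⟨l, hl, rfl⟩ := List.mem_drop_iff_getElem.mp hb
    obtain ⟨_, _, hcross⟩ := hat (by omega)
    exact hv.rel_getElem_of_le_of_rel (by omega) h₂
      (hu.rel_getElem_of_rel_of_le (Nat.le_add_right j l) (by omega) hcross)

lemma firstViolation_swapAt (hv : p.2.Pairwise RedLE) (h₁ : j ≤ p.1.length)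
    (h₂ : j < p.2.length) (hbefore : ∀ i < j, ¬ p.Violation i) :
    (swapAt j p).firstViolation = j := by
  have hlen₁ := length_swapAt_fst h₁ h₂
  have hlen₂ := length_swapAt_snd h₁ h₂
  refine firstViolation_eq (by omega) (fun i hi => (violation_swapAt_iff hi h₁ h₂).not.mpr
    (hbefore i hi)) fun hj => ⟨by omega, by omega, ?_⟩
  have hv' := List.pairwise_iff_getElem.mp hv j (j + 1) h₂ (by omega) (Nat.lt_succ_self j)
  have hmin : min j p.1.length = j := min_eq_left h₁
  simpa [swapAt, List.getElem_append, hmin, h₂] using hv'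

end TwoRows

def blueCount (l : List Letter) : ℕ := (l.map fun x => if x.2 then 1 else 0).sum

def weight (l : List Letter) : ℕ := (l.map Prod.fst).sum

lemma List.Perm.blueCount_eq {l l' : List Letter} (h : l.Perm l') : blueCount l = blueCount l' :=
  (h.map _).sum_eq

lemma List.Perm.weight_eq {l l' : List Letter} (h : l.Perm l') : weight l = weight l' :=
  (h.map _).sum_eq

def RowPairs (n m b a : ℕ) : Set TwoRows :=
  {p | p.1.length = n ∧ p.2.length = m ∧ p.1.Pairwise RedLE ∧ p.2.Pairwise RedLE ∧
    blueCount (p.1 ++ p.2) = b ∧ weight (p.1 ++ p.2) = a}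

namespace TwoRows

def tailSwap (p : TwoRows) : TwoRows := swapAt p.firstViolation p

def Swappable (n m b a : ℕ) : Set TwoRows := {p ∈ RowPairs n m b a | p.firstViolation < m}

variable {n m b a : ℕ} {p : TwoRows}

lemma tailSwap_mem_swappable (hp : p ∈ Swappable n m b a) :
    tailSwap p ∈ Swappable (m - 1) (n + 1) b a := by
  obtain ⟨⟨rfl, rfl, hu, hv, hb, ha⟩, hj⟩ := hp
  have hj₁ : p.firstViolation ≤ p.1.length := firstViolation_le_min.trans (min_le_left _ _)
  have hbefore : ∀ i < p.firstViolation, ¬ p.Violation i :=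
    fun _ => not_violation_of_lt_firstViolation
  have hat (h : p.firstViolation < p.1.length) : p.Violation p.firstViolation :=
    violation_firstViolation (lt_min h hj)
  have hperm := perm_swapAt (j := p.firstViolation) (p := p)
  obtain ⟨hu', hv'⟩ := pairwise_swapAt hu hv hj hbefore hat
  refine ⟨⟨length_swapAt_fst hj₁ hj, length_swapAt_snd hj₁ hj, hu', hv',
    hperm.blueCount_eq.trans hb, hperm.weight_eq.trans ha⟩, ?_⟩
  rw [tailSwap, firstViolation_swapAt hv hj₁ hj hbefore]
  omega

lemma tailSwap_tailSwap (hp : p ∈ Swappable n m b a) : tailSwap (tailSwap p) = p := by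
  obtain ⟨⟨rfl, rfl, -, hv, -⟩, hj⟩ := hp
  have hj₁ : p.firstViolation ≤ p.1.length := firstViolation_le_min.trans (min_le_left _ _)
  rw [tailSwap, tailSwap,
    firstViolation_swapAt hv hj₁ hj fun _ => not_violation_of_lt_firstViolation,
    swapAt_swapAt hj₁ hj]

lemma bijOn_tailSwap (hm : 1 ≤ m) :
    Set.BijOn tailSwap (Swappable n m b a) (Swappable (m - 1) (n + 1) b a) := by
  refine Set.InvOn.bijOn ⟨fun _ => tailSwap_tailSwap, fun _ => tailSwap_tailSwap⟩
    (fun _ => tailSwap_mem_swappable) fun q hq => ?_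
  simpa [Nat.sub_add_cancel hm] using tailSwap_mem_swappable hq

lemma swappable_eq_of_le (h : m ≤ n) :
    Swappable n m b a = {p ∈ RowPairs n m b a | ∃ i, p.Violation i} := by
  ext p
  refine and_congr_right fun hp => ?_
  rw [← firstViolation_lt_min_iff, hp.1, hp.2.1, min_eq_right h]

lemma swappable_eq_of_lt (h : n < m) : Swappable n m b a = RowPairs n m b a :=
  Set.sep_eq_self_iff_mem_true.mpr fun _ hp =>
    (firstViolation_le_min.trans (min_le_left _ _)).trans_lt (hp.1 ▸ h)

end TwoRows

open TwoRows in
lemma ncard_rowPairs {n m b a : ℕ} (h : m ≤ n) (hm : 1 ≤ m) (hfin : (RowPairs n m b a).Finite) :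
    (RowPairs n m b a).ncard =
      {p ∈ RowPairs n m b a | ∀ i, ¬ p.Violation i}.ncard +
        (RowPairs (m - 1) (n + 1) b a).ncard := by
  rw [← swappable_eq_of_lt (n := m - 1) (m := n + 1) (by omega), ← (bijOn_tailSwap hm).ncard_eq,
    swappable_eq_of_le h,
    ← Set.ncard_inter_add_ncard_sdiff_eq_ncard _ {p : TwoRows | ∀ i, ¬ p.Violation i} hfin]
  congr 2
  ext p
  simp

section Finiteness

variable {k : ℕ} {α : Fin k → ℕ}

lemma le_wtCount (T : Filling α) (i : Fin k) (j : Fin (α i)) : (T i j).1 ≤ wtCount T :=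
  calc (T i j).1 ≤ ∑ j', (T i j').1 := Finset.single_le_sum (f := fun j => (T i j).1)
        (fun _ _ => Nat.zero_le _) (Finset.mem_univ j)
    _ ≤ wtCount T := Finset.single_le_sum (f := fun i => ∑ j, (T i j).1)
        (fun _ _ => Nat.zero_le _) (Finset.mem_univ i)

lemma finite_setOf_forall_fst_le (α : Fin k → ℕ) (a : ℕ) :
    {T : Filling α | ∀ i j, (T i j).1 ≤ a}.Finite := by
  have hletters : {x : Letter | x.1 ≤ a}.Finite :=
    ((Set.finite_Iic a).prod Set.finite_univ).subset fun x hx => ⟨hx, trivial⟩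
  refine (Set.Finite.pi fun i => Set.Finite.pi fun (_ : Fin (α i)) => hletters).subset ?_
  intro T hT i _ j _
  exact hT i j

lemma finite_Xi (α : Fin k → ℕ) (b a : ℕ) : (Xi α b a).Finite :=
  (finite_setOf_forall_fst_le α a).subset fun T hT i j => hT.2.2 ▸ le_wtCount T i j

end Finiteness

section TwoRowFillings

variable {n m b a : ℕ}

def rowsOf (T : Filling ![n, m]) : TwoRows := (List.ofFn (T 0), List.ofFn (T 1))

lemma rowsOf_injective : Function.Injective (rowsOf (n := n) (m := m)) := by
  intro T T' h
  simp only [rowsOf, Prod.mk.injEq] at h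
  funext i
  fin_cases i
  exacts [List.ofFn_injective h.1, List.ofFn_injective h.2]

lemma sum_eq_rowsOf (g : Letter → ℕ) (T : Filling ![n, m]) :
    ∑ i, ∑ j, g (T i j) = (((rowsOf T).1 ++ (rowsOf T).2).map g).sum := by
  simp only [rowsOf, Fin.sum_univ_two, List.map_append, List.sum_append, List.map_ofFn,
    List.sum_ofFn, Function.comp_apply]

lemma rowStandardRed_iff_rowsOf {T : Filling ![n, m]} :
    RowStandardRed T ↔ (rowsOf T).1.Pairwise RedLE ∧ (rowsOf T).2.Pairwise RedLE := by
  simp only [rowsOf, List.pairwise_ofFn, RowStandardRed, Fin.forall_fin_two]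
  rfl

lemma Xi_eq_preimage_rowsOf : Xi ![n, m] b a = rowsOf ⁻¹' RowPairs n m b a := by
  ext T
  have hb : blCount T = blueCount ((rowsOf T).1 ++ (rowsOf T).2) :=
    sum_eq_rowsOf (fun x => if x.2 then 1 else 0) T
  have ha : wtCount T = weight ((rowsOf T).1 ++ (rowsOf T).2) := sum_eq_rowsOf _ T
  simp only [Xi, RowPairs, Set.mem_preimage, Set.mem_ofPred_eq, rowStandardRed_iff_rowsOf, hb, ha]
  have hn : (List.ofFn (T 0)).length = n := List.length_ofFn
  have hm : (List.ofFn (T 1)).length = m := List.length_ofFn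
  simp only [rowsOf, hn, hm, true_and, and_assoc]

lemma rowPairs_subset_range_rowsOf :
    RowPairs n m b a ⊆ Set.range (rowsOf (n := n) (m := m)) := by
  rintro ⟨u, v⟩ ⟨rfl, rfl, -⟩
  exact ⟨(piFinTwoEquiv _).symm (fun j => u[(j : ℕ)]'j.2, fun j => v[(j : ℕ)]'j.2),
    Prod.ext List.ofFn_getElem List.ofFn_getElem⟩

lemma ncard_Xi : (Xi ![n, m] b a).ncard = (RowPairs n m b a).ncard := by
  rw [Xi_eq_preimage_rowsOf]
  exact Set.ncard_preimage_of_injective_subset_range rowsOf_injective rowPairs_subset_range_rowsOf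

lemma finite_rowPairs : (RowPairs n m b a).Finite := by
  rw [← Set.image_preimage_eq_of_subset rowPairs_subset_range_rowsOf, ← Xi_eq_preimage_rowsOf]
  exact (finite_Xi ![n, m] b a).image rowsOf

end TwoRowFillings

lemma Fin.sum_univ_eq_of_le_two {n : ℕ} (f : Fin n → ℕ) (h₀ : 0 < n) (h₂ : n ≤ 2) :
    ∑ j, f j = f ⟨0, h₀⟩ + if h : 1 < n then f ⟨1, h⟩ else 0 := by
  obtain _ | _ | _ | n := n
  all_goals first | omega | simp [Fin.sum_univ_succ]

section TwoColumnFillings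

variable {μ1 μ2 b a : ℕ}

abbrev twoColumnShape (μ1 μ2 : ℕ) : Fin μ1 → ℕ := fun j => if (j : ℕ) < μ2 then 2 else 1

lemma twoColumnShape_pos (i : Fin μ1) : 0 < twoColumnShape μ1 μ2 i := by
  unfold twoColumnShape; split <;> omega

lemma twoColumnShape_le_two (i : Fin μ1) : twoColumnShape μ1 μ2 i ≤ 2 := by
  unfold twoColumnShape; split <;> omega

lemma one_lt_twoColumnShape_iff {i : Fin μ1} : 1 < twoColumnShape μ1 μ2 i ↔ (i : ℕ) < μ2 := by
  unfold twoColumnShape; split <;> simp_all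

lemma val_eq_zero_or_one_of_twoColumnShape {i : Fin μ1} (j : Fin (twoColumnShape μ1 μ2 i)) :
    (j : ℕ) = 0 ∨ ((j : ℕ) = 1 ∧ (i : ℕ) < μ2) := by
  have := twoColumnShape_le_two (μ2 := μ2) i
  have := one_lt_twoColumnShape_iff (μ2 := μ2) (i := i)
  omega

def columnsOf (h : μ2 ≤ μ1) (T : Filling (twoColumnShape μ1 μ2)) : TwoRows :=
  (List.ofFn fun i => T i ⟨0, twoColumnShape_pos i⟩,
    List.ofFn fun i : Fin μ2 => T (i.castLE h) ⟨1, one_lt_twoColumnShape_iff.mpr i.2⟩)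

lemma sum_eq_columnsOf (h : μ2 ≤ μ1) (g : Letter → ℕ) (T : Filling (twoColumnShape μ1 μ2)) :
    ∑ i, ∑ j, g (T i j) = (((columnsOf h T).1 ++ (columnsOf h T).2).map g).sum := by
  simp only [Fin.sum_univ_eq_of_le_two _ (twoColumnShape_pos _) (twoColumnShape_le_two _),
    Finset.sum_add_distrib, columnsOf, List.map_append, List.sum_append, List.map_ofFn,
    List.sum_ofFn, Function.comp_apply]
  congr 1
  obtain ⟨d, rfl⟩ := Nat.exists_eq_add_of_le h
  rw [Fin.sum_univ_add]
  simp only [one_lt_twoColumnShape_iff, Fin.val_castAdd, Fin.is_lt, ↓reduceDIte, Fin.val_natAdd,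
    add_lt_iff_neg_left, not_lt_zero, Finset.sum_const_zero, add_zero]
  rfl

lemma columnsOf_injective (h : μ2 ≤ μ1) : Function.Injective (columnsOf h) := by
  intro T T' hT
  simp only [columnsOf, Prod.mk.injEq, List.ofFn_inj] at hT
  funext i j
  obtain ⟨j, hj⟩ := j
  rcases val_eq_zero_or_one_of_twoColumnShape ⟨j, hj⟩ with rfl | ⟨rfl, hi⟩
  · exact congrFun hT.1 i
  · exact congrFun hT.2 ⟨i, hi⟩

lemma rowStandardBlue_iff_columnsOf (h : μ2 ≤ μ1) {T : Filling (twoColumnShape μ1 μ2)} :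
    RowStandardBlue T ↔ ∀ i, ¬ (columnsOf h T).Violation i := by
  simp only [TwoRows.not_violation_iff, columnsOf, List.length_ofFn, List.getElem_ofFn]
  constructor
  · intro hT i h₁ h₂
    exact hT ⟨i, h₁⟩ ⟨0, _⟩ ⟨1, one_lt_twoColumnShape_iff.mpr h₂⟩ Nat.zero_lt_one
  · rintro hT i ⟨j, hj⟩ ⟨j', hj'⟩ hjj'
    rcases val_eq_zero_or_one_of_twoColumnShape ⟨j', hj'⟩ with rfl | ⟨rfl, hi⟩
    · exact absurd hjj' (Nat.not_lt_zero _)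
    · obtain rfl : j = 0 := by simp only [Fin.mk_lt_mk] at hjj'; omega
      exact hT i i.2 hi

lemma colStandardRed_iff_columnsOf (h : μ2 ≤ μ1) {T : Filling (twoColumnShape μ1 μ2)} :
    ColStandardRed T ↔ (columnsOf h T).1.Pairwise RedLE ∧ (columnsOf h T).2.Pairwise RedLE := by
  simp only [columnsOf, List.pairwise_ofFn]
  constructor
  · intro hT
    exact ⟨fun i i' hii' => hT i i' hii' 0 _ _, fun i i' hii' => hT _ _ hii' 1 _ _⟩
  · rintro ⟨h₀, h₁⟩ i i' hii' j hj hj'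
    rcases val_eq_zero_or_one_of_twoColumnShape ⟨j, hj⟩ with rfl | ⟨rfl, hi⟩
    · exact h₀ hii'
    · exact h₁ (i := ⟨i, hi⟩) (j := ⟨i', one_lt_twoColumnShape_iff.mp hj'⟩) hii'

lemma superT_eq_preimage_columnsOf (h : μ2 ≤ μ1) :
    SuperT (twoColumnShape μ1 μ2) b a =
      columnsOf h ⁻¹' {p ∈ RowPairs μ1 μ2 b a | ∀ i, ¬ p.Violation i} := by
  ext T
  have hb : blCount T = blueCount ((columnsOf h T).1 ++ (columnsOf h T).2) :=
    sum_eq_columnsOf h (fun x => if x.2 then 1 else 0) T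
  have ha : wtCount T = weight ((columnsOf h T).1 ++ (columnsOf h T).2) :=
    sum_eq_columnsOf h Prod.fst T
  simp only [SuperT, RowPairs, Set.mem_preimage, Set.mem_ofPred_eq, rowStandardBlue_iff_columnsOf h,
    colStandardRed_iff_columnsOf h, hb, ha]
  simp only [columnsOf, List.length_ofFn, true_and]
  tauto

lemma subset_range_columnsOf (h : μ2 ≤ μ1) :
    {p ∈ RowPairs μ1 μ2 b a | ∀ i, ¬ p.Violation i} ⊆ Set.range (columnsOf h) := by
  rintro ⟨u, v⟩ ⟨⟨hu, hv, -⟩, -⟩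
  refine ⟨fun i j => if hj : (j : ℕ) = 0 then u[(i : ℕ)]'(hu ▸ i.2) else
    v[(i : ℕ)]'(hv ▸ ((val_eq_zero_or_one_of_twoColumnShape j).resolve_left hj).2), ?_⟩
  refine Prod.ext (List.ext_getElem (by simp [columnsOf, hu]) fun k _ _ => ?_)
    (List.ext_getElem (by simp [columnsOf, hv]) fun k _ _ => ?_) <;> simp [columnsOf]

lemma ncard_superT (h : μ2 ≤ μ1) :
    (SuperT (twoColumnShape μ1 μ2) b a).ncard =
      {p ∈ RowPairs μ1 μ2 b a | ∀ i, ¬ p.Violation i}.ncard := by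
  rw [superT_eq_preimage_columnsOf h]
  exact Set.ncard_preimage_of_injective_subset_range (columnsOf_injective h)
    (subset_range_columnsOf h)

end TwoColumnFillings

theorem two_column_involution_general (μ1 μ2 b a : ℕ) (h21 : μ2 ≤ μ1) (h2 : 1 ≤ μ2) :
    ((Xi ![μ1, μ2] b a).ncard : ℤ) - ((Xi ![μ2 - 1, μ1 + 1] b a).ncard : ℤ) =
      ((SuperT (fun j : Fin μ1 => if (j : ℕ) < μ2 then 2 else 1) b a).ncard : ℤ) := by
  rw [ncard_Xi, ncard_Xi, ncard_superT h21, ncard_rowPairs h21 h2 finite_rowPairs]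
  push_cast
  ring

/-- For a two-part partition `μ = (μ₁, μ₂)` with `μ₁ ≥ 2`,
`|Ξ((μ₁,μ₂), b, a)| - |Ξ((μ₂-1, μ₁+1), b, a)| = |ST(μᵗ, b, a)|`. -/
theorem two_column_involution (μ1 μ2 b a : ℕ) (h21 : μ2 ≤ μ1) (h2 : 1 ≤ μ2)
    (h1 : 2 ≤ μ1) :
    ((Xi ![μ1, μ2] b a).ncard : ℤ) - ((Xi ![μ2 - 1, μ1 + 1] b a).ncard : ℤ) =
      ((SuperT (fun j : Fin μ1 => if (j : ℕ) < μ2 then 2 else 1) b a).ncard : ℤ) :=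
  two_column_involution_general μ1 μ2 b a h21 h2
end

section
/- Let μ be a partition of n with μ ≠ (n), and let ST(μ, b, a) denote the set of supertableaux of shape μ with b blue entries and total numerical value a (fillings from A = {red 0 < blue 0 < red 1 < blue 1 < …} that are row-standard in blue entries and column-standard in red entries). Then the alternating sum Σ_{j=0}^{b} (-1)^j |ST(μ, b-j, a+1+j)| equals the number of tableaux in ST(μ, b, a+1) whose entry in the last cell of the first column is red. -/
def redsBelow (x : Letter) : ℕ := x.1 + if x.2 then 1 else 0

lemma rank_le_strict_of_blue_iff (x y : Letter) :
    (rank x ≤ rank y ∧ (x = y → x.2 = false)) ↔ 2 * redsBelow x ≤ rank y := by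
  obtain ⟨m, _ | _⟩ := x <;> obtain ⟨n, _ | _⟩ := y <;> simp [rank, redsBelow]
  omega

lemma rank_le_strict_of_red_iff (x y : Letter) :
    (rank y ≤ rank x ∧ (y = x → y.2 = true)) ↔ rank y < 2 * redsBelow x := by
  obtain ⟨m, _ | _⟩ := x <;> obtain ⟨n, _ | _⟩ := y <;>
    simp [rank, redsBelow] <;> omega

namespace Filling

variable {k : ℕ} {α : Fin k → ℕ}

-- `Filling` is a plain `def`, so the `Function.update` lemmas apply only after unfolding it.
def set (T : Filling α) (i : Fin k) (j : Fin (α i)) (x : Letter) : Filling α :=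
  Function.update (β := fun i => Fin (α i) → Letter) T i (Function.update (T i) j x)

@[simp]
lemma set_apply_self (T : Filling α) (i : Fin k) (j : Fin (α i)) (x : Letter) :
    T.set i j x i j = x := by
  unfold Filling at *
  simp [set]

lemma set_apply_of_ne (T : Filling α) {i i' : Fin k} (j : Fin (α i)) (j' : Fin (α i'))
    (x : Letter) (hc : ¬(i' = i ∧ (j' : ℕ) = j)) : T.set i j x i' j' = T i' j' := by
  unfold Filling at *
  by_cases hi : i' = i
  · subst hi
    simp [set, Fin.val_ne_iff.1 fun h => hc ⟨rfl, h⟩]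
  · simp [set, hi]

@[simp]
lemma set_set (T : Filling α) (i : Fin k) (j : Fin (α i)) (x y : Letter) :
    (T.set i j x).set i j y = T.set i j y := by
  unfold Filling at *
  simp [set]

lemma set_eq_self (T : Filling α) (i : Fin k) (j : Fin (α i)) {x : Letter} (hx : T i j = x) :
    T.set i j x = T := by
  unfold Filling at *
  simp [set, ← hx]

lemma sum_sum_set_add (T : Filling α) (i : Fin k) (j : Fin (α i)) (x : Letter)
    (F : Letter → ℕ) :
    ∑ i', ∑ j', F (T.set i j x i' j') + F (T i j) = ∑ i', ∑ j', F (T i' j') + F x := by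
  have hrow : ∑ j', F (T.set i j x i j') + F (T i j) = ∑ j', F (T i j') + F x := by
    rw [Fintype.sum_eq_add_sum_compl j, Fintype.sum_eq_add_sum_compl j (fun j' => F (T i j')),
      set_apply_self, Finset.sum_congr rfl fun j' hj' => congrArg F (T.set_apply_of_ne j j' x
        fun hc => Finset.mem_compl.1 hj' (Finset.mem_singleton.2 (Fin.ext hc.2)))]
    ring
  rw [Fintype.sum_eq_add_sum_compl i,
    Fintype.sum_eq_add_sum_compl i (fun i' => ∑ j', F (T i' j')),
    Finset.sum_congr rfl fun i' hi' => Finset.sum_congr rfl fun j' _ =>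
      congrArg F (T.set_apply_of_ne j j' x fun hc =>
        Finset.mem_compl.1 hi' (Finset.mem_singleton.2 hc.1))]
  omega

end Filling

section Standard

variable {k : ℕ} {α : Fin k → ℕ} {T : Filling α} {i : Fin k} {x : Letter}

lemma RowStandardBlue.set_first (hT : RowStandardBlue T) (h : 0 < α i)
    (hx : redsBelow x = redsBelow (T i ⟨0, h⟩)) : RowStandardBlue (T.set i ⟨0, h⟩ x) := by
  intro i' j j' hjj'
  have hj' : ¬(i' = i ∧ (j' : ℕ) = 0) := fun hc => Nat.not_lt_zero j (hc.2 ▸ hjj')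
  rw [T.set_apply_of_ne _ j' _ hj']
  by_cases hc : i' = i ∧ (j : ℕ) = 0
  · obtain ⟨rfl, hj⟩ := hc
    obtain rfl : j = ⟨0, h⟩ := Fin.ext hj
    rw [Filling.set_apply_self, rank_le_strict_of_blue_iff, hx, ← rank_le_strict_of_blue_iff]
    exact hT _ _ _ hjj'
  · rw [T.set_apply_of_ne _ j _ hc]
    exact hT _ _ _ hjj'

lemma ColStandardRed.set_first_of_forall_le (hT : ColStandardRed T) (hi : ∀ i', i' ≤ i)
    (h : 0 < α i) (hx : redsBelow x = redsBelow (T i ⟨0, h⟩)) :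
    ColStandardRed (T.set i ⟨0, h⟩ x) := by
  intro i₁ i₂ h₁₂ j hj₁ hj₂
  rw [T.set_apply_of_ne _ _ _ fun hc => (h₁₂.trans_le (hi i₂)).ne hc.1]
  by_cases hc : i₂ = i ∧ j = 0
  · obtain ⟨rfl, rfl⟩ := hc
    rw [Filling.set_apply_self, rank_le_strict_of_red_iff, hx, ← rank_le_strict_of_red_iff]
    exact hT _ _ h₁₂ 0 hj₁ hj₂
  · rw [T.set_apply_of_ne _ _ _ hc]
    exact hT _ _ h₁₂ j hj₁ hj₂

end Standard

def flipColor (x : Letter) : Letter := if x.2 then (x.1 + 1, false) else (x.1 - 1, true)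

lemma redsBelow_flipColor {x : Letter} (hx : 1 ≤ redsBelow x) :
    redsBelow (flipColor x) = redsBelow x := by
  obtain ⟨m, _ | _⟩ := x <;> simp_all [flipColor, redsBelow]

lemma flipColor_flipColor {x : Letter} (hx : 1 ≤ redsBelow x) : flipColor (flipColor x) = x := by
  obtain ⟨m, _ | _⟩ := x <;> simp_all [flipColor, redsBelow]

section Counting

variable {k : ℕ} {α : Fin k → ℕ}

lemma Filling.apply_le_sum_sum (F : Letter → ℕ) (T : Filling α) (i : Fin k) (j : Fin (α i)) :
    F (T i j) ≤ ∑ i', ∑ j', F (T i' j') :=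
  (Finset.single_le_sum (f := fun j' => F (T i j')) (fun _ _ => Nat.zero_le _)
    (Finset.mem_univ j)).trans
  (Finset.single_le_sum (f := fun i' => ∑ j', F (T i' j')) (fun _ _ => Nat.zero_le _)
    (Finset.mem_univ i))

lemma superT_finite (α : Fin k → ℕ) (b a : ℕ) : (SuperT α b a).Finite := by
  refine (Set.Finite.pi fun i => Set.Finite.pi fun j =>
    (Set.finite_Iic a).prod Set.finite_univ).subset fun T hT => ?_
  simp only [Set.mem_pi, Set.mem_univ, Set.mem_prod, Set.mem_Iic, and_true, forall_const]
  intro i j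
  exact hT.2.2.2 ▸ Filling.apply_le_sum_sum Prod.fst T i j

def SuperTWithColor (α : Fin k → ℕ) (b a : ℕ) (i : Fin k) (h : 0 < α i) (c : Bool) :
    Set (Filling α) :=
  {T ∈ SuperT α b a | (T i ⟨0, h⟩).2 = c}

lemma ncard_superT_eq_add (α : Fin k → ℕ) (b a : ℕ) (i : Fin k) (h : 0 < α i) :
    (SuperT α b a).ncard =
      (SuperTWithColor α b a i h false).ncard + (SuperTWithColor α b a i h true).ncard := by
  rw [← Set.ncard_inter_add_ncard_sdiff_eq_ncard _ {T | (T i ⟨0, h⟩).2 = false}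
    (superT_finite α b a)]
  congr 2
  ext T
  simp [SuperTWithColor]

lemma superTWithColor_zero_true (α : Fin k → ℕ) (a : ℕ) (i : Fin k) (h : 0 < α i) :
    SuperTWithColor α 0 a i h true = ∅ := by
  refine Set.eq_empty_of_forall_notMem fun T ⟨⟨_, _, hb, _⟩, hc⟩ => ?_
  have := Filling.apply_le_sum_sum (fun x => if x.2 then 1 else 0) T i ⟨0, h⟩
  simp only [hc, if_true] at this
  unfold blCount at hb
  omega

end Counting

section Involution

variable {k : ℕ} {α : Fin k → ℕ} {T : Filling α} {i : Fin k}

lemma ColStandardRed.one_le_redsBelow (hT : ColStandardRed T) {i₀ : Fin k} (hi₀ : i₀ < i)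
    (h₀ : 0 < α i₀) (h : 0 < α i) : 1 ≤ redsBelow (T i ⟨0, h⟩) := by
  have := (rank_le_strict_of_red_iff _ _).1 (hT i₀ i hi₀ 0 h₀ h)
  omega

lemma Filling.set_mem_superTWithColor {b a b' a' : ℕ} {x : Letter} (hi : ∀ i', i' ≤ i)
    (h : 0 < α i) (hT : T ∈ SuperT α b a) (hx : redsBelow x = redsBelow (T i ⟨0, h⟩))
    (hb : b' + (if (T i ⟨0, h⟩).2 then 1 else 0) = b + if x.2 then 1 else 0)
    (ha : a' + (T i ⟨0, h⟩).1 = a + x.1) :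
    T.set i ⟨0, h⟩ x ∈ SuperTWithColor α b' a' i h x.2 := by
  obtain ⟨hrow, hcol, rfl, rfl⟩ := hT
  refine ⟨⟨hrow.set_first h hx, hcol.set_first_of_forall_le hi h hx, ?_, ?_⟩,
    by rw [Filling.set_apply_self]⟩
  · have := T.sum_sum_set_add i ⟨0, h⟩ x fun y => if y.2 then 1 else 0
    unfold blCount at *
    omega
  · have := T.sum_sum_set_add i ⟨0, h⟩ x Prod.fst
    unfold wtCount at *
    omega

lemma Filling.set_flipColor_set_flipColor (h : 0 < α i) (hT : 1 ≤ redsBelow (T i ⟨0, h⟩)) :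
    (T.set i ⟨0, h⟩ (flipColor (T i ⟨0, h⟩))).set i ⟨0, h⟩
      (flipColor (T.set i ⟨0, h⟩ (flipColor (T i ⟨0, h⟩)) i ⟨0, h⟩)) = T := by
  rw [set_apply_self, set_set, flipColor_flipColor hT, set_eq_self _ _ _ rfl]

theorem ncard_superTWithColor_succ_true {i₀ : Fin k} (hi : ∀ i', i' ≤ i) (hi₀ : i₀ < i)
    (h₀ : 0 < α i₀) (h : 0 < α i) (b a : ℕ) :
    (SuperTWithColor α (b + 1) a i h true).ncard =
      (SuperTWithColor α b (a + 1) i h false).ncard := by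
  let flip : Filling α → Filling α := fun T => T.set i ⟨0, h⟩ (flipColor (T i ⟨0, h⟩))
  have hbelow {b a} {T} (hT : T ∈ SuperT α b a) := hT.2.1.one_le_redsBelow hi₀ h₀ h
  refine (Set.InvOn.bijOn (f := flip) (f' := flip)
    ⟨fun T hT => T.set_flipColor_set_flipColor h (hbelow hT.1),
      fun T hT => T.set_flipColor_set_flipColor h (hbelow hT.1)⟩ ?_ ?_).ncard_eq
  · rintro T ⟨hT, hc⟩
    simpa [flip, flipColor, hc] using
      T.set_mem_superTWithColor (b' := b) (a' := a + 1) hi h hT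
        (redsBelow_flipColor (hbelow hT)) (by simp [flipColor, hc]) (by simp [flipColor, hc]; omega)
  · rintro T ⟨hT, hc⟩
    have hm : 1 ≤ (T i ⟨0, h⟩).1 := by simpa [redsBelow, hc] using hbelow hT
    simpa [flip, flipColor, hc] using
      T.set_mem_superTWithColor (b' := b + 1) (a' := a) hi h hT
        (redsBelow_flipColor (hbelow hT)) (by simp [flipColor, hc]) (by simp [flipColor, hc]; omega)

end Involution

theorem alternating_sum_eq_of_add {A : Type*} [Ring A] {S R : ℕ → ℕ → A}
    (h₀ : ∀ a, S 0 a = R 0 a) (hsucc : ∀ b a, S (b + 1) a = R (b + 1) a + R b (a + 1))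
    (b a : ℕ) :
    ∑ j ∈ Finset.range (b + 1), (-1) ^ j * S (b - j) (a + j) = R b a := by
  induction b generalizing a with
  | zero => simp [h₀]
  | succ b ih =>
    calc ∑ j ∈ Finset.range (b + 2), (-1) ^ j * S (b + 1 - j) (a + j)
        = S (b + 1) a - ∑ j ∈ Finset.range (b + 1), (-1) ^ j * S (b - j) (a + 1 + j) := by
          rw [Finset.sum_range_succ', sub_eq_neg_add, ← Finset.sum_neg_distrib]
          simp [pow_succ, add_assoc, add_comm 1]
      _ = R (b + 1) a := by rw [ih, hsucc]; abel

/-- For a partition `μ` of `n` with `μ ≠ (n)` (i.e. at least two parts),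
`Σ_{j=0}^{b} (-1)^j |SuperT(μ, b-j, a+1+j)|` equals the number of supertableaux in
`SuperT(μ, b, a+1)` whose entry in the last cell of the first column is red. -/
theorem outer_involution_sum (d : ℕ) (hd : 2 ≤ d) (μ : Fin d → ℕ)
    (hpos : ∀ i, 1 ≤ μ i) (b a : ℕ) :
    (∑ j ∈ Finset.range (b + 1),
        (-1 : ℤ) ^ j * ((SuperT μ (b - j) (a + 1 + j)).ncard : ℤ)) =
      (({T ∈ SuperT μ b (a + 1) |
          (T ⟨d - 1, by omega⟩ ⟨0, hpos ⟨d - 1, by omega⟩⟩).2 = false}).ncard : ℤ) := by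
  let last : Fin d := ⟨d - 1, by omega⟩
  have hlast : ∀ i, i ≤ last := fun i => Fin.le_def.2 (by simp [last]; omega)
  have hfirst : (⟨0, by omega⟩ : Fin d) < last := Fin.lt_def.2 (by simp [last]; omega)
  refine alternating_sum_eq_of_add (S := fun b a => ((SuperT μ b a).ncard : ℤ))
    (R := fun b a => ((SuperTWithColor μ b a last (hpos last) false).ncard : ℤ))
    (fun a => ?_) (fun b a => ?_) b (a + 1)
  · simp [ncard_superT_eq_add μ 0 a last (hpos last), superTWithColor_zero_true]
  · rw [ncard_superT_eq_add μ (b + 1) a last (hpos last),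
      ncard_superTWithColor_succ_true hlast hfirst (hpos _) (hpos last)]
    exact Nat.cast_add _ _
end

section
/- If T is a supertableau of shape μ (row-standard in blue, column-standard in red) whose bottom-left entry T(l,1) (with l = l(μ)) is blue with value c, then replacing T(l,1) by red (c+1) yields again a supertableau of shape μ; and if T(l,1) is red with value c ≥ 1 and the cell above (if any) has value strictly less than c, then replacing T(l,1) by blue (c−1) yields again a supertableau; moreover these two operations are mutually inverse. -/
/-- A supertableau: row-standard in the blue entries and column-standard in the red. -/
def IsSuper {k : ℕ} {α : Fin k → ℕ} (T : Filling α) : Prop :=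
  RowStandardBlue T ∧ ColStandardRed T

/-- Replace the bottom-left entry (last row of the first column) by the letter `x`. -/
def updateBL {d : ℕ} {μ : Fin d → ℕ} (T : Filling μ) (x : Letter) : Filling μ :=
  fun i j => if (i : ℕ) = d - 1 ∧ (j : ℕ) = 0 then x else T i j

/-! Only the bottom-left cell changes, so the only constraints at stake are those against the entries
to its right in the last row and above it in the first column. Since `rank (c, blue) = 2c + 1` and
`rank (c, red) = 2c`, a blue `x` may stand left of `y` iff `rank x < rank y` and a red one iff
`rank x ≤ rank y`; dually, `y` may stand above a blue `x` iff `rank y ≤ rank x` and above a red one iff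
`rank y < rank x`. Blue `c` and red `c + 1` have consecutive ranks, so trading one for the other
preserves both kinds of constraint. -/

/-- `x` may stand left of `y` in a row of a supertableau. -/
def RowLE (x y : Letter) : Prop := rank x ≤ rank y ∧ (x = y → x.2 = false)

/-- `x` may stand above `y` in a column of a supertableau. -/
def ColLE (x y : Letter) : Prop := rank x ≤ rank y ∧ (x = y → x.2 = true)

@[simp]
lemma rank_red (c : ℕ) : rank (c, false) = 2 * c := by simp [rank]

@[simp]
lemma rank_blue (c : ℕ) : rank (c, true) = 2 * c + 1 := by simp [rank]

lemma rank_injective : Function.Injective rank := by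
  rintro ⟨a, _ | _⟩ ⟨b, _ | _⟩ h <;> simp [rank] at h ⊢ <;> omega

lemma rowLE_red_iff {c : ℕ} {y : Letter} : RowLE (c, false) y ↔ 2 * c ≤ rank y := by
  simp [RowLE]

lemma rowLE_blue_iff {c : ℕ} {y : Letter} : RowLE (c, true) y ↔ 2 * c + 1 < rank y := by
  refine ⟨fun ⟨hle, hne⟩ => ?_, fun h => ⟨by simp; omega, fun he => by simp [← he] at h⟩⟩
  rw [rank_blue] at hle
  refine lt_of_le_of_ne hle fun he => ?_
  have hy : (c, true) = y := rank_injective (by simpa using he)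
  simpa using hne hy

lemma colLE_red_iff {c : ℕ} {x : Letter} : ColLE x (c, false) ↔ rank x < 2 * c := by
  refine ⟨fun ⟨hle, hne⟩ => ?_, fun h => ⟨by simp; omega, fun he => by simp [he] at h⟩⟩
  rw [rank_red] at hle
  refine lt_of_le_of_ne hle fun he => ?_
  have hx : x = (c, false) := rank_injective (by simpa using he)
  simpa [hx] using hne hx

lemma colLE_blue_iff {c : ℕ} {x : Letter} : ColLE x (c, true) ↔ rank x ≤ 2 * c + 1 := by
  simp +contextual [ColLE]

section updateBL

variable {d : ℕ} {μ : Fin d → ℕ}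

lemma updateBL_updateBL (T : Filling μ) (x y : Letter) :
    updateBL (updateBL T x) y = updateBL T y := by
  funext i j
  simp only [updateBL]
  split_ifs <;> rfl

lemma updateBL_eq_self (T : Filling μ) (hl : d - 1 < d) (h0 : 0 < μ ⟨d - 1, hl⟩) :
    updateBL T (T ⟨d - 1, hl⟩ ⟨0, h0⟩) = T := by
  funext i j
  simp only [updateBL]
  split_ifs with h
  · obtain ⟨i, hi⟩ := i
    obtain ⟨j, hj⟩ := j
    obtain ⟨rfl, rfl⟩ := h
    rfl
  · rfl

lemma IsSuper.updateBL {T : Filling μ} (hT : IsSuper T) (hl : d - 1 < d)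
    (h0 : 0 < μ ⟨d - 1, hl⟩) {x : Letter}
    (hrow : ∀ y, RowLE (T ⟨d - 1, hl⟩ ⟨0, h0⟩) y → RowLE x y)
    (hcol : ∀ y, ColLE y (T ⟨d - 1, hl⟩ ⟨0, h0⟩) → ColLE y x) :
    IsSuper (updateBL T x) := by
  constructor
  · rintro ⟨i, hi⟩ ⟨j, hj⟩ ⟨j', hj'⟩ hjj'
    rw [Fin.mk_lt_mk] at hjj'
    simp only [_root_.updateBL]
    split_ifs with h h' h'
    · omega
    · obtain ⟨rfl, rfl⟩ := h
      exact hrow _ (hT.1 _ ⟨0, h0⟩ ⟨j', hj'⟩ hjj')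
    · omega
    · exact hT.1 _ _ _ hjj'
  · rintro ⟨i, hi⟩ ⟨i', hi'⟩ hii' j hj hj'
    rw [Fin.mk_lt_mk] at hii'
    simp only [_root_.updateBL]
    split_ifs with h h' h'
    · omega
    · omega
    · obtain ⟨rfl, rfl⟩ := h'
      exact hcol _ (hT.2 ⟨i, hi⟩ ⟨d - 1, hl⟩ hii' 0 hj h0)
    · exact hT.2 _ _ hii' j hj hj'

end updateBL

/-- If the bottom-left entry of a supertableau `T` of shape `μ` is
blue `c`, replacing it by red `c+1` again gives a supertableau; if it is red `c`
with `c ≥ 1` and the cell above (if any) has numerical value strictly less than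
`c`, replacing it by blue `c-1` again gives a supertableau; and these two
operations are mutually inverse. -/
theorem supertableau_bottom_left_ops (d : ℕ) (hd : 0 < d) (μ : Fin d → ℕ)
    (h0 : 0 < μ ⟨d - 1, by omega⟩) (T : Filling μ) (hT : IsSuper T) :
    (∀ c : ℕ, T ⟨d - 1, by omega⟩ ⟨0, h0⟩ = (c, true) →
      IsSuper (updateBL T (c + 1, false)) ∧
        updateBL (updateBL T (c + 1, false)) (c, true) = T) ∧
    (∀ c : ℕ, 1 ≤ c → T ⟨d - 1, by omega⟩ ⟨0, h0⟩ = (c, false) →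
      (∀ (hd2 : 2 ≤ d) (hcol : 0 < μ ⟨d - 2, by omega⟩),
          (T ⟨d - 2, by omega⟩ ⟨0, hcol⟩).1 < c) →
      IsSuper (updateBL T (c - 1, true)) ∧
        updateBL (updateBL T (c - 1, true)) (c, false) = T) := by
  have hl : d - 1 < d := by omega
  refine ⟨fun c hc => ⟨?_, ?_⟩, fun c hc1 hc _ => ⟨?_, ?_⟩⟩
  · refine hT.updateBL hl h0 (fun y => ?_) (fun y => ?_)
    · rw [hc, rowLE_blue_iff, rowLE_red_iff]; omega
    · rw [hc, colLE_blue_iff, colLE_red_iff]; omega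
  · rw [updateBL_updateBL, ← hc, updateBL_eq_self]
  · refine hT.updateBL hl h0 (fun y => ?_) (fun y => ?_)
    · rw [hc, rowLE_red_iff, rowLE_blue_iff]; omega
    · rw [hc, colLE_red_iff, colLE_blue_iff]; omega
  · rw [updateBL_updateBL, ← hc, updateBL_eq_self]
end
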